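/- Let β > 1. There exists a constant c > 0, depending only on β, such that c·β^n ≤ |F_β(n)| ≤ β^n for all n ≥ 1; moreover 1 ≤ |L_β(n)|/|F_β(n)| ≤ c^{−1}·β/(β−1) for all n ≥ 1. -/

import Mathlib

/-!
A word is in `L_β(n)` (admissible) iff none of its suffixes exceeds `ω` at its first difference
from `ω`, and in `F_β(n)` (full) iff each of its suffixes falls strictly below `ω` before the word
ends. Every shift of `ω` is lexicographically smaller than `ω`, so cutting off the longest suffix
of an admissible word that is a prefix of `ω` leaves a full word: `|L_β(n)| ≤ ∑_{k ≤ n} |F_β(k)|`.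
The values `∑ bᵢ β^{-i-1}` of full words of length `n` are `β^{-n}`-separated and at most
`1 - β^{-n}`, so `|F_β(n)| ≤ βⁿ`, while the greedy expansions of `k / βⁿ`, `k < βⁿ`, are distinct
words of `L_β(n)`, so `βⁿ ≤ |L_β(n)|`. As `|F_β(n)|` increases with `n`, these bounds force
`|F_β(n)| ≥ c βⁿ`, and then `|L_β(n)| ≤ ∑_{k ≤ n} βᵏ ≤ c⁻¹ β/(β - 1) |F_β(n)|`.
-/

open MeasureTheory Filter

namespace PaperStmt

def IsGreedyExpansionOfOne (β : ℝ) (ω : ℕ → ℕ) : Prop :=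
  (∑' n : ℕ, (ω n : ℝ) / β ^ (n + 1)) = 1 ∧
  (∀ n : ℕ, 1 < (∑ k ∈ Finset.range (n + 1), (ω k : ℝ) / β ^ (k + 1)) + 1 / β ^ (n + 1)) ∧
  (∀ N : ℕ, ∃ n : ℕ, N ≤ n ∧ ω n ≠ 0)

def lexLeOmega (ω : ℕ → ℕ) (x : ℤ → ℕ) (n : ℤ) (m : ℕ) : Prop :=
  (∀ i : ℕ, i ≤ m → x (n + (i : ℤ)) = ω i) ∨
  ∃ j : ℕ, j ≤ m ∧ (∀ i : ℕ, i < j → x (n + (i : ℤ)) = ω i) ∧ x (n + (j : ℤ)) < ω j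

def betaShift (ω : ℕ → ℕ) : Set (ℤ → ℕ) :=
  {x | ∀ (n : ℤ) (m : ℕ), lexLeOmega ω x n m}

def wordCyl {A : Type*} {k : ℕ} (a : Fin k → A) : Set (ℤ → A) :=
  {x | ∀ i : Fin k, x ((i : ℕ) : ℤ) = a i}

def langWords {A : Type*} (Y : Set (ℤ → A)) (k : ℕ) : Set (Fin k → A) :=
  {a | ∃ x ∈ Y, x ∈ wordCyl a}

def followWords (Y : Set (ℤ → ℕ)) (k : ℕ) : Set (Fin k → ℕ) :=
  {a | a ∈ langWords Y k ∧
    ∀ (m : ℕ) (z : Fin m → ℕ), z ∈ langWords Y m → Fin.append a z ∈ langWords Y (k + m)}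

section Words

variable {ω : ℕ → ℕ}

/- A word of length `n` is a function `b : ℕ → ℕ` read on `[0, n)`; `IsAdmissible ω n` and
`IsFull ω n` describe `L_β(n)` and `F_β(n)`. -/

def DropsAt (ω : ℕ → ℕ) (n : ℕ) (b : ℕ → ℕ) (p : ℕ) : Prop :=
  ∃ j, p + j < n ∧ (∀ i < j, b (p + i) = ω i) ∧ b (p + j) < ω j

def IsAdmissible (ω : ℕ → ℕ) (n : ℕ) (b : ℕ → ℕ) : Prop :=
  ∀ p t, p + t < n → (∀ i < t, b (p + i) = ω i) → b (p + t) ≤ ω t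

def IsFull (ω : ℕ → ℕ) (n : ℕ) (b : ℕ → ℕ) : Prop :=
  ∀ p < n, DropsAt ω n b p

def ShiftsLexLt (ω : ℕ → ℕ) : Prop :=
  ∀ q, 0 < q → ∃ j, (∀ i < j, ω (q + i) = ω i) ∧ ω (q + j) < ω j

lemma le_of_agree_of_drop {c d : ℕ → ℕ} {j t : ℕ} (hj : ∀ i < j, c i = d i) (hlt : c j < d j)
    (ht : ∀ i < t, c i = d i) : c t ≤ d t := by
  rcases lt_trichotomy t j with h | rfl | h
  · exact (hj t h).le
  · exact hlt.le
  · exact absurd (ht j h) hlt.ne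

lemma eq_omega_of_shift_eq {q r j : ℕ} {c : ℕ → ℕ} (hshift : ∀ i < j, ω (q + i) = ω i)
    (hc : ∀ i < q, c i = ω i) (hc' : ∀ i < r, c (q + i) = ω i) (hrj : r ≤ j) :
    ∀ i < q + r, c i = ω i := by
  intro i hi
  by_cases hiq : i < q
  · exact hc i hiq
  · obtain ⟨k, rfl⟩ := Nat.exists_eq_add_of_le (not_lt.1 hiq)
    rw [hc' k (by omega), hshift k (by omega)]

lemma ShiftsLexLt.omega_zero_pos (hω : ShiftsLexLt ω) : 0 < ω 0 := by
  obtain ⟨j, hj, hlt⟩ := hω 1 one_pos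
  have hconst : ∀ i ≤ j, ω i = ω 0 := by
    intro i hi
    induction i with
    | zero => rfl
    | succ i ih => rw [← ih (by omega), add_comm, hj i (by omega)]
  rw [← hconst j le_rfl]
  omega

lemma IsAdmissible.mono {n m : ℕ} {b : ℕ → ℕ} (hb : IsAdmissible ω n b) (hmn : m ≤ n) :
    IsAdmissible ω m b :=
  fun p t ht => hb p t (by omega)

lemma IsAdmissible.congr {n : ℕ} {b b' : ℕ → ℕ} (hb : IsAdmissible ω n b)
    (h : ∀ i < n, b i = b' i) : IsAdmissible ω n b' := by
  intro p t ht hagree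
  rw [← h _ ht]
  exact hb p t ht fun i hi => by rw [h _ (by omega)]; exact hagree i hi

lemma IsFull.congr {n : ℕ} {b b' : ℕ → ℕ} (hb : IsFull ω n b) (h : ∀ i < n, b i = b' i) :
    IsFull ω n b' := by
  intro p hp
  obtain ⟨j, hj, hagree, hlt⟩ := hb p hp
  exact ⟨j, hj, fun i hi => by rw [← h _ (by omega)]; exact hagree i hi, by rwa [← h _ hj]⟩

lemma IsFull.isAdmissible {n : ℕ} {b : ℕ → ℕ} (hb : IsFull ω n b) : IsAdmissible ω n b := by
  intro p t ht hagree
  obtain ⟨j, -, hj, hlt⟩ := hb p (by omega)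
  exact le_of_agree_of_drop (c := fun i => b (p + i)) hj hlt hagree

lemma IsFull.suffix {n : ℕ} {b : ℕ → ℕ} (hb : IsFull ω n b) (k : ℕ) :
    IsFull ω (n - k) fun i => b (k + i) := by
  intro p hp
  obtain ⟨j, hj, hagree, hlt⟩ := hb (k + p) (by omega)
  exact ⟨j, by omega, fun i hi => by rw [← hagree i hi, add_assoc], by rwa [add_assoc] at hlt⟩

lemma IsAdmissible.le_omega_zero {n p : ℕ} {b : ℕ → ℕ} (hb : IsAdmissible ω n b) (hp : p < n) :
    b p ≤ ω 0 :=
  hb p 0 hp fun _ h => absurd h (Nat.not_lt_zero _)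

lemma IsAdmissible.eq_omega_of_not_dropsAt {n p : ℕ} {b : ℕ → ℕ} (hb : IsAdmissible ω n b)
    (hp : ¬ DropsAt ω n b p) : ∀ i, p + i < n → b (p + i) = ω i := by
  intro i
  induction i using Nat.strong_induction_on with
  | _ i ih =>
    intro hi
    have hagree : ∀ k < i, b (p + k) = ω k := fun k hk => ih k hk (by omega)
    exact (hb p i hi hagree).eq_of_not_lt fun hlt => hp ⟨i, hi, hagree, hlt⟩

lemma ShiftsLexLt.isAdmissible (hω : ShiftsLexLt ω) (n : ℕ) : IsAdmissible ω n ω := by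
  intro p t _ hagree
  rcases Nat.eq_zero_or_pos p with rfl | hp
  · simp
  · obtain ⟨j, hj, hlt⟩ := hω p hp
    exact le_of_agree_of_drop (c := fun i => ω (p + i)) hj hlt hagree

def padZero {n : ℕ} (a : Fin n → ℕ) : ℕ → ℕ := fun i => if h : i < n then a ⟨i, h⟩ else 0

lemma padZero_of_lt {n i : ℕ} (a : Fin n → ℕ) (h : i < n) : padZero a i = a ⟨i, h⟩ := dif_pos h

lemma padZero_of_le {n i : ℕ} (a : Fin n → ℕ) (h : n ≤ i) : padZero a i = 0 :=
  dif_neg (not_lt.2 h)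

lemma padZero_append {n m : ℕ} (a : Fin n → ℕ) (z : Fin m → ℕ) (k : ℕ) :
    padZero (Fin.append a z) k = if k < n then padZero a k else padZero z (k - n) := by
  by_cases hk : k < n
  · rw [if_pos hk, padZero_of_lt _ (by omega), padZero_of_lt _ hk]
    exact Fin.append_left a z ⟨k, hk⟩
  rw [if_neg hk]
  by_cases hkm : k < n + m
  · rw [padZero_of_lt _ hkm, padZero_of_lt _ (by omega),
      show (⟨k, hkm⟩ : Fin (n + m)) = Fin.natAdd n ⟨k - n, by omega⟩ from Fin.ext (by simp; omega)]
    exact Fin.append_right a z _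
  · rw [padZero_of_le _ (by omega), padZero_of_le _ (by omega)]

def prependWord (n : ℕ) (b : ℕ → ℕ) (x : ℤ → ℕ) : ℤ → ℕ :=
  fun i => if i < 0 then 0 else if i < n then b i.toNat else x (i - n)

lemma prependWord_natCast (n : ℕ) (b : ℕ → ℕ) (x : ℤ → ℕ) (k : ℕ) :
    prependWord n b x k = if k < n then b k else x (k - n : ℕ) := by
  have hk : ¬ (k : ℤ) < 0 := by omega
  simp only [prependWord, if_neg hk, Nat.cast_lt, Int.toNat_natCast]
  split_ifs
  · rfl
  · congr 1
    omega

lemma prependWord_add (n : ℕ) (b : ℕ → ℕ) (x : ℤ → ℕ) (p i : ℕ) :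
    prependWord n b x (p + i) = if p + i < n then b (p + i) else x (p + i - n : ℕ) := by
  rw [← Nat.cast_add, prependWord_natCast]

lemma lexLeOmega_of_forall_le {x : ℤ → ℕ} {s : ℤ} {m : ℕ}
    (h : ∀ t ≤ m, (∀ i < t, x (s + i) = ω i) → x (s + t) ≤ ω t) : lexLeOmega ω x s m := by
  induction m with
  | zero =>
    rcases (h 0 le_rfl fun i hi => absurd hi (Nat.not_lt_zero _)).eq_or_lt with heq | hlt
    · exact Or.inl fun i hi => by rwa [Nat.le_zero.1 hi]
    · exact Or.inr ⟨0, le_rfl, fun i hi => absurd hi (Nat.not_lt_zero _), hlt⟩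
  | succ m ih =>
    rcases ih fun t ht => h t (by omega) with hall | ⟨j, hj, hagree, hlt⟩
    · have hagree : ∀ i < m + 1, x (s + i) = ω i := fun i hi => hall i (by omega)
      rcases (h (m + 1) le_rfl hagree).eq_or_lt with heq | hlt
      · refine Or.inl fun i hi => ?_
        rcases Nat.lt_or_eq_of_le hi with hi | rfl
        exacts [hagree i hi, heq]
      · exact Or.inr ⟨m + 1, le_rfl, hagree, hlt⟩
    · exact Or.inr ⟨j, by omega, hagree, hlt⟩

lemma mem_betaShift_iff {x : ℤ → ℕ} :
    x ∈ betaShift ω ↔ ∀ (s : ℤ) (t : ℕ), (∀ i < t, x (s + i) = ω i) → x (s + t) ≤ ω t := by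
  refine ⟨fun hx s t ht => ?_, fun h s m => lexLeOmega_of_forall_le fun t _ => h s t⟩
  rcases hx s t with hall | ⟨j, -, hj, hlt⟩
  · exact (hall t le_rfl).le
  · exact le_of_agree_of_drop (c := fun i => x (s + i)) hj hlt ht

lemma zero_mem_betaShift (hω0 : 0 < ω 0) : (0 : ℤ → ℕ) ∈ betaShift ω := by
  refine mem_betaShift_iff.2 fun s t ht => ?_
  rcases Nat.eq_zero_or_pos t with rfl | ht0
  · exact Nat.zero_le _
  · exact absurd (ht 0 ht0).symm hω0.ne'

lemma prependWord_mem_betaShift (hω0 : 0 < ω 0) {n : ℕ} {b : ℕ → ℕ} {x : ℤ → ℕ}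
    (hx : x ∈ betaShift ω)
    (hb : ∀ p < n, ∀ t : ℕ, (∀ i < t, prependWord n b x (p + i) = ω i) →
      prependWord n b x (p + t) ≤ ω t) :
    prependWord n b x ∈ betaShift ω := by
  refine mem_betaShift_iff.2 fun s t ht => ?_
  rcases lt_or_ge s 0 with hs | hs
  · have hzero : prependWord n b x s = 0 := if_pos hs
    rcases Nat.eq_zero_or_pos t with rfl | ht0
    · simp [hzero]
    · exact absurd (ht 0 ht0) (by simpa [hzero] using hω0.ne)
  lift s to ℕ using hs
  rcases lt_or_ge s n with hsn | hsn
  · exact hb s hsn t ht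
  · have hval : ∀ i : ℕ, prependWord n b x (s + i) = x ((s - n : ℕ) + i) := fun i => by
      rw [← Nat.cast_add, prependWord_natCast, if_neg (by omega)]
      congr 1
      omega
    rw [hval]
    exact mem_betaShift_iff.1 hx _ t fun i hi => by rw [← hval]; exact ht i hi

lemma prependWord_mem_wordCyl {n : ℕ} (a : Fin n → ℕ) (x : ℤ → ℕ) :
    prependWord n (padZero a) x ∈ wordCyl a := fun i => by
  rw [prependWord_natCast, if_pos i.isLt, padZero_of_lt _ i.isLt]

lemma prependWord_mem_wordCyl_append {n m : ℕ} (a : Fin n → ℕ) {z : Fin m → ℕ} {x : ℤ → ℕ}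
    (hx : x ∈ wordCyl z) : prependWord n (padZero a) x ∈ wordCyl (Fin.append a z) := fun k => by
  show _ = Fin.append a z ⟨k, k.isLt⟩
  rw [← padZero_of_lt (Fin.append a z) k.isLt, padZero_append, prependWord_natCast]
  split_ifs with hk
  · rfl
  · rw [padZero_of_lt _ (by omega)]
    exact hx ⟨k - n, by omega⟩

lemma mem_langWords_betaShift_iff (hω0 : 0 < ω 0) {n : ℕ} {a : Fin n → ℕ} :
    a ∈ langWords (betaShift ω) n ↔ IsAdmissible ω n (padZero a) := by
  constructor
  · rintro ⟨x, hx, hcyl⟩ p t hpt hagree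
    have hval : ∀ i, p + i < n → x (p + i : ℕ) = padZero a (p + i) := fun i hi => by
      rw [padZero_of_lt _ hi]
      exact hcyl ⟨p + i, hi⟩
    rw [← hval t hpt]
    exact_mod_cast mem_betaShift_iff.1 hx p t fun i hi => by
      exact_mod_cast (hval i (by omega)).trans (hagree i hi)
  · intro ha
    refine ⟨_, prependWord_mem_betaShift hω0 (zero_mem_betaShift hω0) fun p _ t hagree => ?_,
      prependWord_mem_wordCyl a 0⟩
    rw [prependWord_add]
    split_ifs with h
    · refine ha p t h fun i hi => ?_
      simpa [prependWord_add, show p + i < n by omega] using hagree i hi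
    · exact Nat.zero_le _

lemma mem_followWords_betaShift_iff (hω : ShiftsLexLt ω) {n : ℕ} {a : Fin n → ℕ} :
    a ∈ followWords (betaShift ω) n ↔ IsFull ω n (padZero a) := by
  have hω0 := hω.omega_zero_pos
  constructor
  · rintro ⟨ha, happend⟩ p hp
    by_contra hnd
    have hagree := ((mem_langWords_betaShift_iff hω0).1 ha).eq_omega_of_not_dropsAt hnd
    -- Appending `ω₀ ⋯ ω_j`, where `σ^(n - p) ω` drops below `ω` at `j`, makes the suffix at `p`
    -- exceed `ω` at `n - p + j`.
    obtain ⟨j, hshift, hlt⟩ := hω (n - p) (by omega)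
    let z : Fin (j + 1) → ℕ := fun i => ω i
    have hz : z ∈ langWords (betaShift ω) (j + 1) := (mem_langWords_betaShift_iff hω0).2
      ((hω.isAdmissible _).congr fun i hi => (padZero_of_lt z hi).symm)
    have hval : ∀ i, n ≤ p + i → p + i < n + (j + 1) →
        padZero (Fin.append a z) (p + i) = ω (p + i - n) := fun i h1 h2 => by
      rw [padZero_append, if_neg (by omega), padZero_of_lt _ (by omega)]
    have hle := (mem_langWords_betaShift_iff hω0).1 (happend _ _ hz) p (n - p + j) (by omega)
      (eq_omega_of_shift_eq hshift (c := fun i => padZero (Fin.append a z) (p + i))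
        (fun i hi => by rw [padZero_append, if_pos (by omega)]; exact hagree i (by omega))
        (fun i hi => by rw [hval _ (by omega) (by omega)]; congr 1; omega) le_rfl)
    rw [hval _ (by omega) (by omega), show p + (n - p + j) - n = j by omega] at hle
    omega
  · intro ha
    refine ⟨(mem_langWords_betaShift_iff hω0).2 ha.isAdmissible, fun m z ⟨x, hx, hcyl⟩ =>
      ⟨_, prependWord_mem_betaShift hω0 hx fun p hp t hagree => ?_,
        prependWord_mem_wordCyl_append a hcyl⟩⟩
    obtain ⟨j, hj, hjagree, hlt⟩ := ha p hp
    have hval : ∀ i, p + i < n → prependWord n (padZero a) x (p + i) = padZero a (p + i) :=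
      fun i hi => by rw [prependWord_add, if_pos hi]
    refine le_of_agree_of_drop (c := fun i => prependWord n (padZero a) x (p + i)) (j := j)
      (fun i hi => ?_) ?_ hagree
    · rw [hval i (by omega)]
      exact hjagree i hi
    · rwa [hval j hj]

def admissibleSet (ω : ℕ → ℕ) (n : ℕ) : Set (ℕ → ℕ) :=
  {b | IsAdmissible ω n b ∧ ∀ i, n ≤ i → b i = 0}

def fullSet (ω : ℕ → ℕ) (n : ℕ) : Set (ℕ → ℕ) :=
  {b | IsFull ω n b ∧ ∀ i, n ≤ i → b i = 0}

lemma padZero_injective (n : ℕ) : Function.Injective (padZero (n := n)) := fun a a' h =>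
  funext fun i => by simpa [padZero_of_lt _ i.isLt] using congrFun h i

lemma image_padZero_setOf {n : ℕ} (Q : (ℕ → ℕ) → Prop) :
    padZero '' {a : Fin n → ℕ | Q (padZero a)} = {b | Q b ∧ ∀ i, n ≤ i → b i = 0} := by
  ext b
  constructor
  · rintro ⟨a, ha, rfl⟩
    exact ⟨ha, fun i hi => padZero_of_le a hi⟩
  · rintro ⟨hb, hz⟩
    have hpad : padZero (fun i : Fin n => b i) = b := funext fun i => by
      by_cases hi : i < n
      · exact padZero_of_lt _ hi
      · rw [padZero_of_le _ (not_lt.1 hi), hz i (not_lt.1 hi)]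
    exact ⟨_, show Q (padZero _) by rwa [hpad], hpad⟩

lemma ncard_setOf_padZero {n : ℕ} (Q : (ℕ → ℕ) → Prop) :
    {a : Fin n → ℕ | Q (padZero a)}.ncard = {b | Q b ∧ ∀ i, n ≤ i → b i = 0}.ncard := by
  rw [← image_padZero_setOf, Set.ncard_image_of_injective _ (padZero_injective n)]

lemma ncard_langWords_betaShift (hω0 : 0 < ω 0) (n : ℕ) :
    (langWords (betaShift ω) n).ncard = (admissibleSet ω n).ncard := by
  rw [show langWords (betaShift ω) n = {a | IsAdmissible ω n (padZero a)} from
    Set.ext fun _ => mem_langWords_betaShift_iff hω0]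
  exact ncard_setOf_padZero _

lemma ncard_followWords_betaShift (hω : ShiftsLexLt ω) (n : ℕ) :
    (followWords (betaShift ω) n).ncard = (fullSet ω n).ncard := by
  rw [show followWords (betaShift ω) n = {a | IsFull ω n (padZero a)} from
    Set.ext fun _ => mem_followWords_betaShift_iff hω]
  exact ncard_setOf_padZero _

lemma admissibleSet_finite (n : ℕ) : (admissibleSet ω n).Finite := by
  rw [admissibleSet, ← image_padZero_setOf]
  refine ((Set.Finite.pi fun _ => Set.finite_Iic (ω 0)).subset fun a ha i _ => ?_).image _
  simpa [padZero_of_lt _ i.isLt] using IsAdmissible.le_omega_zero ha i.isLt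

lemma fullSet_subset_admissibleSet (n : ℕ) : fullSet ω n ⊆ admissibleSet ω n :=
  fun _ hb => ⟨hb.1.isAdmissible, hb.2⟩

lemma fullSet_finite (n : ℕ) : (fullSet ω n).Finite :=
  (admissibleSet_finite n).subset (fullSet_subset_admissibleSet n)

lemma fullSet_subset_succ (hω0 : 0 < ω 0) (n : ℕ) : fullSet ω n ⊆ fullSet ω (n + 1) := by
  rintro b ⟨hb, hz⟩
  refine ⟨fun p hp => ?_, fun i hi => hz i (by omega)⟩
  rcases Nat.lt_succ_iff_lt_or_eq.1 hp with hp | rfl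
  · obtain ⟨j, hj, h⟩ := hb p hp
    exact ⟨j, by omega, h⟩
  · exact ⟨0, by omega, fun i hi => absurd hi (Nat.not_lt_zero _), by rwa [add_zero, hz p le_rfl]⟩

lemma monotone_ncard_fullSet (hω0 : 0 < ω 0) : Monotone fun n => (fullSet ω n).ncard :=
  monotone_nat_of_le_succ fun n => Set.ncard_le_ncard (fullSet_subset_succ hω0 n) (fullSet_finite _)

/-- If the suffix at `p < k` did not drop before `k`, it would match `ω` up to `k`; the drop of
`σ^(k - p) ω` then either makes `b` exceed `ω` from `p`, or lets the match run up to `n`. -/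
lemma IsAdmissible.isFull_of_longest_omega_suffix (hω : ShiftsLexLt ω) {n k : ℕ} {b : ℕ → ℕ}
    (hb : IsAdmissible ω n b) (hk : k ≤ n) (hsuf : ∀ i, k + i < n → b (k + i) = ω i)
    (hmin : ∀ p < k, ¬ ∀ i, p + i < n → b (p + i) = ω i) : IsFull ω k b := by
  intro p hp
  by_contra hnd
  obtain ⟨j, hshift, hlt⟩ := hω (k - p) (by omega)
  have hc : ∀ i < k - p, b (p + i) = ω i :=
    fun i hi => (hb.mono hk).eq_omega_of_not_dropsAt hnd i (by omega)
  have hc' : ∀ i < n - k, b (p + (k - p + i)) = ω i := fun i hi => by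
    rw [← hsuf i (by omega)]
    congr 1
    omega
  rcases lt_or_ge j (n - k) with hj | hj
  · have hle := hb p (k - p + j) (by omega)
      (eq_omega_of_shift_eq hshift (c := fun i => b (p + i)) hc (fun i hi => hc' i (by omega))
        le_rfl)
    rw [hc' j hj] at hle
    omega
  · exact hmin p hp fun i hi =>
      eq_omega_of_shift_eq hshift (c := fun i => b (p + i)) hc hc' hj i (by omega)

def appendOmega (ω : ℕ → ℕ) (k n : ℕ) (u : ℕ → ℕ) : ℕ → ℕ :=
  fun i => if i < k then u i else if i < n then ω (i - k) else 0

lemma admissibleSet_subset_biUnion (hω : ShiftsLexLt ω) (n : ℕ) :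
    admissibleSet ω n ⊆ ⋃ k ∈ Finset.range (n + 1), appendOmega ω k n '' fullSet ω k := by
  classical
  rintro b ⟨hb, hz⟩
  have hex : ∃ k, k ≤ n ∧ ∀ i, k + i < n → b (k + i) = ω i := ⟨n, le_rfl, fun i hi => by omega⟩
  obtain ⟨hkn, hsuf⟩ := Nat.find_spec hex
  have hfull := hb.isFull_of_longest_omega_suffix hω hkn hsuf fun p hp hp' =>
    Nat.find_min hex hp ⟨by omega, hp'⟩
  refine Set.mem_iUnion₂.2 ⟨Nat.find hex, Finset.mem_range.2 (Nat.lt_succ_of_le hkn),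
    fun i => if i < Nat.find hex then b i else 0,
    ⟨hfull.congr fun i hi => (if_pos hi).symm, fun i hi => if_neg (by omega)⟩, funext fun i => ?_⟩
  simp only [appendOmega]
  split_ifs with h1 h2
  · rfl
  · rw [← hsuf (i - Nat.find hex) (by omega)]
    congr 1
    omega
  · rw [hz i (by omega)]

lemma ncard_admissibleSet_le_sum (hω : ShiftsLexLt ω) (n : ℕ) :
    (admissibleSet ω n).ncard ≤ ∑ k ∈ Finset.range (n + 1), (fullSet ω k).ncard :=
  calc (admissibleSet ω n).ncard
      ≤ (⋃ k ∈ Finset.range (n + 1), appendOmega ω k n '' fullSet ω k).ncard :=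
        Set.ncard_le_ncard (admissibleSet_subset_biUnion hω n)
          ((Finset.range (n + 1)).finite_toSet.biUnion fun k _ => (fullSet_finite k).image _)
    _ ≤ ∑ k ∈ Finset.range (n + 1), (appendOmega ω k n '' fullSet ω k).ncard :=
        Finset.set_ncard_biUnion_le _ _
    _ ≤ ∑ k ∈ Finset.range (n + 1), (fullSet ω k).ncard :=
        Finset.sum_le_sum fun k _ => Set.ncard_image_le (fullSet_finite k)

end Words

noncomputable def wordValue (β : ℝ) (n : ℕ) (b : ℕ → ℕ) : ℝ :=
  ∑ i ∈ Finset.range n, (b i : ℝ) / β ^ (i + 1)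

section WordValue

variable {β : ℝ}

lemma wordValue_nonneg (hβ : 0 < β) (n : ℕ) (b : ℕ → ℕ) : 0 ≤ wordValue β n b :=
  Finset.sum_nonneg fun _ _ => by positivity

lemma wordValue_mono (hβ : 0 < β) (b : ℕ → ℕ) : Monotone fun n => wordValue β n b :=
  fun _ _ h => Finset.sum_le_sum_of_subset_of_nonneg (Finset.range_subset_range.2 h)
    fun _ _ _ => by positivity

lemma wordValue_congr {n : ℕ} {b b' : ℕ → ℕ} (h : ∀ i < n, b i = b' i) :
    wordValue β n b = wordValue β n b' :=
  Finset.sum_congr rfl fun i hi => by rw [h i (Finset.mem_range.1 hi)]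

lemma wordValue_add (β : ℝ) (k m : ℕ) (b : ℕ → ℕ) :
    wordValue β (k + m) b = wordValue β k b + wordValue β m (fun i => b (k + i)) / β ^ k := by
  rw [wordValue, Finset.sum_range_add, wordValue, wordValue, Finset.sum_div]
  congr 1
  refine Finset.sum_congr rfl fun i _ => ?_
  rw [show k + i + 1 = i + 1 + k by ring, pow_add, div_div]

lemma wordValue_succ (β : ℝ) (n : ℕ) (b : ℕ → ℕ) :
    wordValue β (n + 1) b = wordValue β n b + b n / β ^ (n + 1) :=
  Finset.sum_range_succ _ _

lemma wordValue_add_le_of_lt (hβ : 0 < β) {a b : ℕ → ℕ} {j : ℕ} (hj : ∀ i < j, a i = b i)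
    (hlt : a j < b j) : wordValue β (j + 1) a + 1 / β ^ (j + 1) ≤ wordValue β (j + 1) b := by
  have hdigit : ((a j : ℝ) + 1) / β ^ (j + 1) ≤ b j / β ^ (j + 1) := by
    gcongr
    exact_mod_cast hlt
  rw [wordValue_succ, wordValue_succ, wordValue_congr hj]
  linarith [add_div (a j : ℝ) 1 (β ^ (j + 1))]

lemma wordValue_add_le_of_tail (hβ : 0 < β) {n j : ℕ} {b b' : ℕ → ℕ} (hj : j < n)
    (hpre : ∀ i < j, b i = b' i) (hlt : b j < b' j)
    (htail : wordValue β (n - (j + 1)) (fun i => b (j + 1 + i)) + 1 / β ^ (n - (j + 1)) ≤ 1) :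
    wordValue β n b + 1 / β ^ n ≤ wordValue β n b' := by
  obtain ⟨m, rfl⟩ := Nat.exists_eq_add_of_lt hj
  rw [show j + m + 1 - (j + 1) = m by omega] at htail
  have hβj : 0 < β ^ (j + 1) := pow_pos hβ _
  calc wordValue β (j + m + 1) b + 1 / β ^ (j + m + 1)
      = wordValue β (j + 1) b +
          (wordValue β m (fun i => b (j + 1 + i)) + 1 / β ^ m) / β ^ (j + 1) := by
        rw [show j + m + 1 = j + 1 + m by ring, wordValue_add, pow_add]
        field_simp
        ring
    _ ≤ wordValue β (j + 1) b + 1 / β ^ (j + 1) := by gcongr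
    _ ≤ wordValue β (j + 1) b' := wordValue_add_le_of_lt hβ hpre hlt
    _ ≤ wordValue β (j + m + 1) b' := wordValue_mono hβ b' (by omega)

variable {ω : ℕ → ℕ}

lemma IsFull.wordValue_add_le_one (hβ : 0 < β) (hω : ∀ m, wordValue β m ω ≤ 1) {n : ℕ}
    {b : ℕ → ℕ} (hb : IsFull ω n b) : wordValue β n b + 1 / β ^ n ≤ 1 := by
  induction n using Nat.strong_induction_on generalizing b with
  | _ n ih =>
    rcases Nat.eq_zero_or_pos n with rfl | hn
    · simp [wordValue]
    obtain ⟨j, hj, hpre, hlt⟩ := hb 0 hn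
    simp only [zero_add] at hj hpre hlt
    exact (wordValue_add_le_of_tail hβ hj hpre hlt
      (ih _ (by omega) (hb.suffix (j + 1)))).trans (hω n)

lemma IsFull.wordValue_add_le (hβ : 0 < β) (hω : ∀ m, wordValue β m ω ≤ 1) {n j : ℕ}
    {b b' : ℕ → ℕ} (hb : IsFull ω n b) (hj : j < n) (hpre : ∀ i < j, b i = b' i)
    (hlt : b j < b' j) : wordValue β n b + 1 / β ^ n ≤ wordValue β n b' :=
  wordValue_add_le_of_tail hβ hj hpre hlt ((hb.suffix (j + 1)).wordValue_add_le_one hβ hω)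

lemma exists_first_ne {b b' : ℕ → ℕ} (h : b ≠ b') :
    ∃ j, (∀ i < j, b i = b' i) ∧ b j ≠ b' j := by
  classical
  have hex : ∃ j, b j ≠ b' j := Function.ne_iff.1 h
  exact ⟨Nat.find hex, fun i hi => not_not.1 (Nat.find_min hex hi), Nat.find_spec hex⟩

lemma floor_lt_floor_of_add_one_le {x y : ℝ} (hx : 0 ≤ x) (h : x + 1 ≤ y) : ⌊x⌋₊ < ⌊y⌋₊ :=
  Nat.lt_of_succ_le ((Nat.floor_add_one hx).symm.trans_le (Nat.floor_mono h))

lemma ncard_fullSet_le (hβ : 0 < β) (hω : ∀ m, wordValue β m ω ≤ 1) (n : ℕ) :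
    ((fullSet ω n).ncard : ℝ) ≤ β ^ n := by
  have hβn : 0 < β ^ n := pow_pos hβ n
  let f : (ℕ → ℕ) → ℕ := fun b => ⌊β ^ n * wordValue β n b⌋₊
  have hf : ∀ b y, wordValue β n b + 1 / β ^ n ≤ y → f b < ⌊β ^ n * y⌋₊ := fun b y h =>
    floor_lt_floor_of_add_one_le (by positivity [wordValue_nonneg hβ n b]) <| by
      have := mul_le_mul_of_nonneg_left h hβn.le
      rwa [mul_add, mul_one_div_cancel hβn.ne'] at this
  have hmaps : ∀ b ∈ fullSet ω n, f b ∈ (Finset.range ⌊β ^ n⌋₊ : Set ℕ) := fun b hb => by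
    simpa using hf b 1 (hb.1.wordValue_add_le_one hβ hω)
  have hinj : Set.InjOn f (fullSet ω n) := by
    intro b hb b' hb' heq
    by_contra hne
    obtain ⟨j, hpre, hj⟩ := exists_first_ne hne
    have hjn : j < n := by
      by_contra hjn
      exact hj (by rw [hb.2 j (by omega), hb'.2 j (by omega)])
    rcases lt_or_gt_of_ne hj with hlt | hlt
    · exact (hf b _ (hb.1.wordValue_add_le hβ hω hjn hpre hlt)).ne heq
    · exact (hf b' _ (hb'.1.wordValue_add_le hβ hω hjn (fun i hi => (hpre i hi).symm) hlt)).ne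
        heq.symm
  have hcard := Set.ncard_le_ncard_of_injOn f hmaps hinj
  rw [Set.ncard_coe_finset, Finset.card_range] at hcard
  exact (Nat.cast_le.2 hcard).trans (Nat.floor_le hβn.le)

noncomputable def betaMap (β y : ℝ) : ℝ := β * y - ⌊β * y⌋₊

noncomputable def greedyDigits (β y : ℝ) (i : ℕ) : ℕ := ⌊β * (betaMap β)^[i] y⌋₊

lemma betaMap_mem_Ico (hβ : 0 < β) {y : ℝ} (hy : 0 ≤ y) : betaMap β y ∈ Set.Ico 0 1 :=
  ⟨sub_nonneg.2 (Nat.floor_le (by positivity)), by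
    have := Nat.lt_floor_add_one (β * y)
    unfold betaMap
    linarith⟩

lemma iterate_betaMap_mem_Ico (hβ : 0 < β) {y : ℝ} (hy : y ∈ Set.Ico 0 1) :
    ∀ i, (betaMap β)^[i] y ∈ Set.Ico 0 1
  | 0 => hy
  | i + 1 => by
    rw [Function.iterate_succ_apply']
    exact betaMap_mem_Ico hβ (iterate_betaMap_mem_Ico hβ hy i).1

lemma greedyDigits_iterate (β y : ℝ) (p i : ℕ) :
    greedyDigits β ((betaMap β)^[p] y) i = greedyDigits β y (p + i) := by
  rw [greedyDigits, greedyDigits, ← Function.iterate_add_apply, add_comm]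

lemma eq_wordValue_greedyDigits_add (hβ : β ≠ 0) (y : ℝ) (n : ℕ) :
    y = wordValue β n (greedyDigits β y) + (betaMap β)^[n] y / β ^ n := by
  induction n with
  | zero => simp [wordValue]
  | succ n ih =>
    have hstep : (betaMap β)^[n] y / β ^ n = (greedyDigits β y n : ℝ) / β ^ (n + 1) +
        (betaMap β)^[n + 1] y / β ^ (n + 1) := by
      rw [Function.iterate_succ_apply', betaMap, greedyDigits]
      field_simp
      ring
    rw [wordValue_succ]
    linarith

lemma greedyDigits_le (hβ : 0 < β) (hω : ∀ t, 1 < wordValue β (t + 1) ω + 1 / β ^ (t + 1))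
    {y : ℝ} (hy : y ∈ Set.Ico 0 1) {t : ℕ} (ht : ∀ i < t, greedyDigits β y i = ω i) :
    greedyDigits β y t ≤ ω t := by
  by_contra! hlt
  have hgap := wordValue_add_le_of_lt hβ (fun i hi => (ht i hi).symm) hlt
  have hrem : 0 ≤ (betaMap β)^[t + 1] y / β ^ (t + 1) :=
    div_nonneg (iterate_betaMap_mem_Ico hβ hy _).1 (pow_pos hβ _).le
  linarith [eq_wordValue_greedyDigits_add hβ.ne' y (t + 1), hω t, hy.2]

lemma isAdmissible_greedyDigits (hβ : 0 < β)
    (hω : ∀ t, 1 < wordValue β (t + 1) ω + 1 / β ^ (t + 1)) {y : ℝ} (hy : y ∈ Set.Ico 0 1)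
    (n : ℕ) : IsAdmissible ω n (greedyDigits β y) := fun p t _ hagree => by
  rw [← greedyDigits_iterate]
  exact greedyDigits_le hβ hω (iterate_betaMap_mem_Ico hβ hy p) fun i hi => by
    rw [greedyDigits_iterate]
    exact hagree i hi

lemma le_ncard_admissibleSet (hβ : 0 < β)
    (hω : ∀ t, 1 < wordValue β (t + 1) ω + 1 / β ^ (t + 1)) (n : ℕ) :
    β ^ n ≤ (admissibleSet ω n).ncard := by
  have hβn : 0 < β ^ n := pow_pos hβ n
  have hmem : ∀ k ∈ (Finset.range ⌈β ^ n⌉₊ : Set ℕ), (k / β ^ n : ℝ) ∈ Set.Ico 0 1 :=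
    fun k hk => ⟨by positivity, (div_lt_one hβn).2 (Nat.lt_ceil.1 (by simpa using hk))⟩
  let g : ℕ → ℕ → ℕ := fun k i => if i < n then greedyDigits β (k / β ^ n) i else 0
  have hmaps : ∀ k ∈ (Finset.range ⌈β ^ n⌉₊ : Set ℕ), g k ∈ admissibleSet ω n := fun k hk =>
    ⟨(isAdmissible_greedyDigits hβ hω (hmem k hk) n).congr fun i hi => (if_pos hi).symm,
      fun i hi => if_neg (by omega)⟩
  have hinj : Set.InjOn g (Finset.range ⌈β ^ n⌉₊) := by
    intro k hk k' hk' heq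
    have hval : ∀ k : ℕ, (k : ℝ) = β ^ n * wordValue β n (g k) + (betaMap β)^[n] (k / β ^ n) :=
      fun k => by
        have hW : wordValue β n (g k) = wordValue β n (greedyDigits β (k / β ^ n)) :=
          wordValue_congr fun i hi => if_pos hi
        have hk : (k : ℝ) = β ^ n * (wordValue β n (greedyDigits β (k / β ^ n)) +
            (betaMap β)^[n] (k / β ^ n) / β ^ n) := by
          rw [← eq_wordValue_greedyDigits_add hβ.ne']
          field_simp
        rw [hW]
        rwa [mul_add, ← mul_div_assoc, mul_div_cancel_left₀ _ hβn.ne'] at hk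
    have h1 := hval k
    have h2 := hval k'
    rw [heq] at h1
    have r1 := iterate_betaMap_mem_Ico hβ (hmem k hk) n
    have r2 := iterate_betaMap_mem_Ico hβ (hmem k' hk') n
    have hkk' : k < k' + 1 := by exact_mod_cast (show (k : ℝ) < k' + 1 by linarith [r1.2, r2.1])
    have hk'k : k' < k + 1 := by exact_mod_cast (show (k' : ℝ) < k + 1 by linarith [r1.1, r2.2])
    omega
  have hcard := Set.ncard_le_ncard_of_injOn g hmaps hinj (admissibleSet_finite n)
  rw [Set.ncard_coe_finset, Finset.card_range] at hcard
  exact (Nat.le_ceil _).trans (Nat.cast_le.2 hcard)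

end WordValue

/-- The last `J + 1` terms of `∑_{k ≤ n} G k` carry at least half of `βⁿ` once
`2 / (β - 1) < β^J`. -/
lemma exists_pos_mul_pow_le {β : ℝ} (hβ : 1 < β) {G : ℕ → ℝ} (hG : Monotone G)
    (hGle : ∀ k, G k ≤ β ^ k) (hsum : ∀ n, β ^ n ≤ ∑ k ∈ Finset.range (n + 1), G k) :
    ∃ c > 0, ∀ n, c * β ^ n ≤ G n := by
  have hβ1 : 0 < β - 1 := by linarith
  obtain ⟨J, hJ⟩ := pow_unbounded_of_one_lt (2 / (β - 1)) hβ
  refine ⟨1 / (2 * (J + 1)), by positivity, fun n => ?_⟩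
  suffices β ^ n ≤ 2 * (J + 1) * G n by
    rw [div_mul_eq_mul_div, one_mul, div_le_iff₀ (by positivity)]
    linarith
  have hwindow : ∀ a r, ∑ i ∈ Finset.range r, G (a + i) ≤ r * G (a + r - 1) := fun a r => by
    simpa using Finset.sum_le_sum fun i (hi : i ∈ Finset.range r) =>
      hG (show a + i ≤ a + r - 1 by have := Finset.mem_range.1 hi; omega)
  rcases lt_or_ge n J with hn | hn
  · have h := (hsum n).trans (by simpa using hwindow 0 (n + 1))
    have hGn : 0 < G n :=
      pos_of_mul_pos_right ((pow_pos (by linarith) n).trans_le h) (by positivity)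
    calc β ^ n ≤ (n + 1) * G n := by exact_mod_cast h
      _ ≤ 2 * (J + 1) * G n := by
        gcongr
        have : (n : ℝ) < J := by exact_mod_cast hn
        linarith
  · obtain ⟨a, rfl⟩ := Nat.exists_eq_add_of_le' hn
    have hhead : ∑ k ∈ Finset.range a, G k ≤ β ^ (a + J) / 2 := by
      calc ∑ k ∈ Finset.range a, G k ≤ ∑ k ∈ Finset.range a, β ^ k :=
            Finset.sum_le_sum fun k _ => hGle k
        _ = (β ^ a - 1) / (β - 1) := geom_sum_eq hβ.ne' a
        _ ≤ β ^ a / (β - 1) := by gcongr; linarith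
        _ = β ^ a * (2 / (β - 1)) / 2 := by field_simp
        _ ≤ β ^ (a + J) / 2 := by
            rw [pow_add]
            gcongr
    have := hsum (a + J)
    rw [show a + J + 1 = a + (J + 1) by ring, Finset.sum_range_add] at this
    have htail := hwindow a (J + 1)
    rw [show a + (J + 1) - 1 = a + J by omega] at htail
    push_cast at htail
    linarith

namespace IsGreedyExpansionOfOne

variable {β : ℝ} {ω : ℕ → ℕ}

lemma summable (hω : IsGreedyExpansionOfOne β ω) :
    Summable fun n => (ω n : ℝ) / β ^ (n + 1) := by
  by_contra h
  exact zero_ne_one ((tsum_eq_zero_of_not_summable h).symm.trans hω.1)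

lemma summable_shift (hβ : 0 < β) (hω : IsGreedyExpansionOfOne β ω) (q : ℕ) :
    Summable fun i => (ω (q + i) : ℝ) / β ^ (i + 1) := by
  refine (((summable_nat_add_iff q).2 hω.summable).mul_left (β ^ q)).congr fun i => ?_
  rw [add_comm i q, show q + i + 1 = q + (i + 1) by ring, pow_add]
  field_simp

lemma one_lt_wordValue_add (hω : IsGreedyExpansionOfOne β ω) (t : ℕ) :
    1 < wordValue β (t + 1) ω + 1 / β ^ (t + 1) :=
  hω.2.1 t

lemma wordValue_le_one (hβ : 0 < β) (hω : IsGreedyExpansionOfOne β ω) (m : ℕ) :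
    wordValue β m ω ≤ 1 :=
  hω.1 ▸ hω.summable.sum_le_tsum _ fun _ _ => by positivity

lemma tsum_shift_lt_one (hβ : 0 < β) (hω : IsGreedyExpansionOfOne β ω) {q : ℕ} (hq : 0 < q) :
    ∑' i, (ω (q + i) : ℝ) / β ^ (i + 1) < 1 := by
  have hβq : 0 < β ^ q := pow_pos hβ q
  have htail : ∑' i, (ω (i + q) : ℝ) / β ^ (i + q + 1) =
      (∑' i, (ω (q + i) : ℝ) / β ^ (i + 1)) / β ^ q := by
    rw [← tsum_div_const]
    refine tsum_congr fun i => ?_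
    rw [add_comm i q, show q + i + 1 = i + 1 + q by ring, pow_add, div_div]
  have hsplit := hω.summable.sum_add_tsum_nat_add q
  rw [hω.1, htail] at hsplit
  obtain ⟨t, rfl⟩ : ∃ t, q = t + 1 := ⟨q - 1, by omega⟩
  have hgreedy := hω.2.1 t
  have : (∑' i, (ω (t + 1 + i) : ℝ) / β ^ (i + 1)) / β ^ (t + 1) < 1 / β ^ (t + 1) := by
    linarith
  rwa [div_lt_div_iff_of_pos_right hβq] at this

lemma shiftsLexLt (hβ : 0 < β) (hω : IsGreedyExpansionOfOne β ω) : ShiftsLexLt ω := by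
  intro q hq
  have hT := hω.tsum_shift_lt_one hβ hq
  have hle : ∀ t, (∀ i < t, ω (q + i) = ω i) → ω (q + t) ≤ ω t := by
    intro t ht
    by_contra! hlt
    have hgap := wordValue_add_le_of_lt hβ (fun i hi => (ht i hi).symm) hlt
    have hpart : wordValue β (t + 1) (fun i => ω (q + i)) ≤ ∑' i, (ω (q + i) : ℝ) / β ^ (i + 1) :=
      (hω.summable_shift hβ q).sum_le_tsum _ fun _ _ => by positivity
    linarith [hω.one_lt_wordValue_add t]
  by_contra! hnlt
  have heq : ∀ i, ω (q + i) = ω i := by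
    intro i
    induction i using Nat.strong_induction_on with
    | _ i ih => exact le_antisymm (hle i ih) (hnlt i ih)
  simp only [heq] at hT
  linarith [hω.1]

lemma exists_pos_mul_pow_le_ncard_fullSet (hβ : 1 < β) (hω : IsGreedyExpansionOfOne β ω) :
    ∃ c > 0, ∀ n, c * β ^ n ≤ (fullSet ω n).ncard := by
  have hβ0 : 0 < β := by linarith
  have hshift := hω.shiftsLexLt hβ0
  refine exists_pos_mul_pow_le hβ
    (Nat.mono_cast.comp (monotone_ncard_fullSet hshift.omega_zero_pos))
    (ncard_fullSet_le hβ0 (hω.wordValue_le_one hβ0)) fun n => ?_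
  calc β ^ n ≤ (admissibleSet ω n).ncard := le_ncard_admissibleSet hβ0 hω.one_lt_wordValue_add n
    _ ≤ ∑ k ∈ Finset.range (n + 1), ((fullSet ω k).ncard : ℝ) := by
        exact_mod_cast ncard_admissibleSet_le_sum hshift n

lemma ncard_admissibleSet_le (hβ : 1 < β) (hω : IsGreedyExpansionOfOne β ω) (n : ℕ) :
    ((admissibleSet ω n).ncard : ℝ) ≤ β ^ (n + 1) / (β - 1) := by
  have hβ0 : 0 < β := by linarith
  calc ((admissibleSet ω n).ncard : ℝ)
      ≤ ∑ k ∈ Finset.range (n + 1), ((fullSet ω k).ncard : ℝ) := by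
        exact_mod_cast ncard_admissibleSet_le_sum (hω.shiftsLexLt hβ0) n
    _ ≤ ∑ k ∈ Finset.range (n + 1), β ^ k :=
        Finset.sum_le_sum fun k _ => ncard_fullSet_le hβ0 (hω.wordValue_le_one hβ0) k
    _ = (β ^ (n + 1) - 1) / (β - 1) := geom_sum_eq hβ.ne' _
    _ ≤ β ^ (n + 1) / (β - 1) := by
        have : 0 < β - 1 := by linarith
        gcongr
        linarith

end IsGreedyExpansionOfOne

theorem betaShift_word_counts
    (β : ℝ) (hβ : 1 < β) (ω : ℕ → ℕ) (hω : IsGreedyExpansionOfOne β ω) :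
    ∃ c : ℝ, 0 < c ∧
      ∀ n : ℕ, 1 ≤ n →
        c * β ^ n ≤ ((followWords (betaShift ω) n).ncard : ℝ) ∧
        ((followWords (betaShift ω) n).ncard : ℝ) ≤ β ^ n ∧
        1 ≤ ((langWords (betaShift ω) n).ncard : ℝ) / ((followWords (betaShift ω) n).ncard : ℝ) ∧
        ((langWords (betaShift ω) n).ncard : ℝ) / ((followWords (betaShift ω) n).ncard : ℝ) ≤
          c⁻¹ * (β / (β - 1)) := by
  have hβ0 : 0 < β := by linarith
  have hshift := hω.shiftsLexLt hβ0
  obtain ⟨c, hc, hcF⟩ := hω.exists_pos_mul_pow_le_ncard_fullSet hβ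
  refine ⟨c, hc, fun n _ => ?_⟩
  rw [ncard_followWords_betaShift hshift, ncard_langWords_betaShift hshift.omega_zero_pos]
  have hFn : 0 < ((fullSet ω n).ncard : ℝ) := (mul_pos hc (pow_pos hβ0 n)).trans_le (hcF n)
  refine ⟨hcF n, ncard_fullSet_le hβ0 (hω.wordValue_le_one hβ0) n, ?_, ?_⟩
  · rw [one_le_div hFn]
    exact_mod_cast Set.ncard_le_ncard (fullSet_subset_admissibleSet n) (admissibleSet_finite n)
  · have : 0 < β - 1 := by linarith
    rw [div_le_iff₀ hFn]
    calc ((admissibleSet ω n).ncard : ℝ) ≤ β ^ (n + 1) / (β - 1) := hω.ncard_admissibleSet_le hβ n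
      _ = c⁻¹ * (β / (β - 1)) * (c * β ^ n) := by
          field_simp
          ring
      _ ≤ c⁻¹ * (β / (β - 1)) * (fullSet ω n).ncard := by gcongr; exact hcF n

end PaperStmt
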